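/- arXiv:0711.3387 — 2 statements merged into one kernel-verified Lean document; each statement's English description precedes it below -/
import Mathlib

section
/- For integers 1 ≤ k ≤ n, the number of words of length n over {1,...,k} that use every letter of {1,...,k} and avoid both patterns 1-11 and 1-21 equals the coefficient of x^n in the polynomial x · (1+x)^k · ∏_{j=2}^{k} ((1+x)^j − 1). -/
open Polynomial

/-- `w` contains the generalized pattern 1-11: ∃ i < j < n with w i = w j = w (j+1). -/
def Contains111 {n m : ℕ} (w : Fin n → Fin m) : Prop :=
  ∃ i j k : Fin n, i < j ∧ (j : ℕ) + 1 = (k : ℕ) ∧ w i = w j ∧ w j = w k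

/-- `w` contains the generalized pattern 1-21: ∃ i < j < n with w i = w (j+1) < w j. -/
def Contains121 {n m : ℕ} (w : Fin n → Fin m) : Prop :=
  ∃ i j k : Fin n, i < j ∧ (j : ℕ) + 1 = (k : ℕ) ∧ w i = w k ∧ w i < w j

namespace Reduced

/-- Goodness (pattern avoidance) of a word, relative to a set `s` of letters already seen. -/
def GoodF (s : Set ℕ) : List ℕ → Prop
  | [] => True
  | a :: w => (∀ y ∈ w.head?, y ∈ s → a < y) ∧ GoodF (insert a s) w

/-- The set of good surjective words of length n over the alphabet {0,...,k-1}. -/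
def WSet (n k : ℕ) : Set (List ℕ) :=
  {w | w.length = n ∧ (∀ c ∈ w, c < k) ∧ (∀ c, c < k → c ∈ w) ∧ GoodF ∅ w}

/-- Insert copies of the new top letter `t` into a word, before the first occurrence of
each letter in `S` (with `t ∈ S` meaning: at the end); if `b`, double the first one. -/
def dec (t : ℕ) (b : Bool) (S : Finset ℕ) : List ℕ → List ℕ
  | [] => if t ∈ S then (if b then [t, t] else [t]) else []
  | c :: u => if c ∈ S then (if b then [t, t, c] else [t, c]) ++ dec t false (S.erase c) u
              else c :: dec t b S u

/-- Inverse of `dec`: extract the word without `t`'s, the slot set and the doubling flag. -/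
def enc (t : ℕ) : List ℕ → List ℕ × Finset ℕ × Bool
  | [] => ([], ∅, false)
  | [c] => if c = t then ([], {t}, false) else ([c], ∅, false)
  | c :: d :: w =>
      if c = t then
        (if d = t then ((enc t (d :: w)).1, (enc t (d :: w)).2.1, true)
         else ((enc t (d :: w)).1, insert d (enc t (d :: w)).2.1, (enc t (d :: w)).2.2))
      else (c :: (enc t (d :: w)).1, (enc t (d :: w)).2.1, (enc t (d :: w)).2.2)

/-- The insertion data type: a nonempty slot set together with a doubling flag, of total size r. -/
def DataT (K r : ℕ) := {p : Finset (Fin K) × Bool // p.1.Nonempty ∧ p.1.card + (cond p.2 1 0) = r}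

instance (K r : ℕ) : Finite (DataT K r) := Subtype.finite

/-! ### Basic lemmas on GoodF -/

theorem goodF_mono : ∀ (w : List ℕ) {s s' : Set ℕ}, s' ⊆ s → GoodF s w → GoodF s' w := by
  intro w
  induction w with
  | nil => intro s s' _ _; trivial
  | cons a w ih =>
    intro s s' hss h
    simp only [GoodF] at h ⊢
    exact ⟨fun y hy hys => h.1 y hy (hss hys), ih (Set.insert_subset_insert hss) h.2⟩

theorem goodF_pair : ∀ (l : List ℕ) {s x y v}, GoodF s (l ++ x :: y :: v) → (y ∈ s ∨ y ∈ l) → x < y := by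
  intro l
  induction l with
  | nil =>
    intro s x y v h hy
    simp only [List.nil_append, GoodF] at h
    rcases hy with hy | hy
    · exact h.1 y (by simp) hy
    · simp at hy
  | cons a l ih =>
    intro s x y v h hy
    simp only [List.cons_append, GoodF] at h
    apply ih h.2
    rcases hy with hy | hy
    · exact Or.inl (Set.mem_insert_iff.2 (Or.inr hy))
    · rcases List.mem_cons.1 hy with rfl | hy
      · exact Or.inl (Set.mem_insert _ _)
      · exact Or.inr hy

theorem goodF_of_splits : ∀ (w : List ℕ) {s : Set ℕ},
    (∀ l x y v, w = l ++ x :: y :: v → (y ∈ s ∨ y ∈ l) → x < y) → GoodF s w := by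
  intro w
  induction w with
  | nil => intro s _; trivial
  | cons a w ih =>
    intro s h
    simp only [GoodF]
    constructor
    · intro y hy hys
      cases w with
      | nil => simp at hy
      | cons b w' =>
        simp only [List.head?_cons, Option.mem_some_iff] at hy
        subst hy
        exact h [] a b w' (by simp) (Or.inl hys)
    · apply ih
      intro l x y v hw hy
      apply h (a :: l) x y v (by rw [hw]; rfl)
      rcases hy with hy | hy
      · rcases Set.mem_insert_iff.1 hy with rfl | hy
        · exact Or.inr (List.mem_cons_self)
        · exact Or.inl hy
      · exact Or.inr (List.mem_cons.2 (Or.inr hy))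

theorem goodF_congr : ∀ (w : List ℕ) {s s' : Set ℕ},
    (∀ y ∈ w, (y ∈ s ↔ y ∈ s')) → GoodF s w → GoodF s' w := by
  intro w
  induction w with
  | nil => intro s s' _ _; trivial
  | cons a w ih =>
    intro s s' hiff h
    simp only [GoodF] at h ⊢
    constructor
    · intro y hy hys
      exact h.1 y hy ((hiff y (List.mem_cons.2 (Or.inr (List.mem_of_mem_head? hy)))).2 hys)
    · apply ih _ h.2
      intro y hy
      simp only [Set.mem_insert_iff]
      rw [hiff y (List.mem_cons.2 (Or.inr hy))]

theorem goodF_iff_forall (w : List ℕ) (s : Set ℕ) :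
    GoodF s w ↔ ∀ j : ℕ, ∀ h : j + 1 < w.length,
      (w[j+1] ∈ s ∨ w[j+1] ∈ w.take j) → w[j] < w[j+1] := by
  induction w generalizing s with
  | nil => simp [GoodF]
  | cons a w ih =>
    simp only [GoodF, ih (insert a s)]
    constructor
    · rintro ⟨h1, h2⟩ j hj hmem
      match j with
      | 0 =>
        cases w with
        | nil => simp at hj
        | cons b w' =>
          simp only [List.getElem_cons_succ, List.getElem_cons_zero] at hmem ⊢
          apply h1 b (by simp)
          simpa using hmem
      | j+1 =>
        simp only [List.getElem_cons_succ] at hmem ⊢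
        simp only [List.length_cons] at hj
        apply h2 j (by omega)
        rw [List.take_succ_cons] at hmem
        rcases hmem with hm | hm
        · exact Or.inl (Set.mem_insert_iff.2 (Or.inr hm))
        · rcases List.mem_cons.1 hm with he | hm
          · exact Or.inl (he ▸ Set.mem_insert _ _)
          · exact Or.inr hm
    · intro h
      constructor
      · intro y hy hys
        cases w with
        | nil => simp at hy
        | cons b w' =>
          simp only [List.head?_cons, Option.mem_some_iff] at hy
          subst hy
          exact h 0 (by simp) (Or.inl hys)
      · intro j hj hmem
        have := h (j+1) (by simpa using Nat.succ_lt_succ hj)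
        simp only [List.getElem_cons_succ, List.take_succ_cons] at this
        apply this
        rcases hmem with hm | hm
        · rcases Set.mem_insert_iff.1 hm with he | hm
          · exact Or.inr (he ▸ List.mem_cons_self)
          · exact Or.inl hm
        · exact Or.inr (List.mem_cons.2 (Or.inr hm))

/-! ### Deletion of the top letter preserves goodness -/

theorem head_filter {p : ℕ → Bool} : ∀ {w : List ℕ} {y : ℕ}, (w.filter p).head? = some y →
    ∃ M V, w = M ++ y :: V ∧ (∀ c ∈ M, ¬ p c) ∧ p y := by
  intro w
  induction w with
  | nil => intro y h; simp at h
  | cons a w ih =>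
    intro y h
    by_cases hp : p a
    · rw [List.filter_cons_of_pos hp] at h
      simp only [List.head?_cons, Option.some_inj] at h
      exact ⟨[], w, by simp [h], by simp, h ▸ hp⟩
    · rw [List.filter_cons_of_neg (by simpa using hp)] at h
      obtain ⟨M, V, rfl, hM, hy⟩ := ih h
      exact ⟨a :: M, V, rfl, by simpa using And.intro hp hM, hy⟩

theorem good_filter {t : ℕ} : ∀ (w : List ℕ) (s : Set ℕ), GoodF s w → (∀ c ∈ w, c ≤ t) →
    GoodF s (w.filter (· ≠ t)) := by
  intro w
  induction w with
  | nil => intro s h _; simpa using h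
  | cons a w ih =>
    intro s h hle
    have h1 : ∀ y ∈ w.head?, y ∈ s → a < y := by simp only [GoodF] at h; exact h.1
    have h2 : GoodF (insert a s) w := by simp only [GoodF] at h; exact h.2
    by_cases ha : a = t
    · cases ha
      rw [List.filter_cons_of_neg (by simp)]
      exact goodF_mono _ (Set.subset_insert _ _)
        (ih _ h2 fun c hc => hle c (List.mem_cons_of_mem _ hc))
    · rw [List.filter_cons_of_pos (by simpa using ha)]
      simp only [GoodF]
      refine ⟨?_, ih _ h2 fun c hc => hle c (List.mem_cons_of_mem _ hc)⟩
      intro y hy hys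
      obtain ⟨M, V, hw, hM, hyt⟩ := head_filter hy
      have hyt' : y ≠ t := by simpa using hyt
      have hylt : y < t := by
        have := hle y (by rw [hw]; exact List.mem_cons_of_mem _ (by simp))
        omega
      rcases M.eq_nil_or_concat with rfl | ⟨M₀, mlast, rfl⟩
      · simp only [List.nil_append] at hw
        subst hw
        exact h1 y (by simp) hys
      · exfalso
        have hml : mlast = t := by simpa using hM mlast (by simp)
        have hlist : a :: w = (a :: M₀) ++ mlast :: y :: V := by rw [hw]; simp
        have hpair : mlast < y := goodF_pair (a :: M₀) (hlist ▸ h) (Or.inl hys)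
        omega

/-! ### Lemmas about dec -/

theorem dec_filter {t : ℕ} : ∀ (u : List ℕ) (b : Bool) (S : Finset ℕ), (∀ c ∈ u, c ≠ t) →
    (dec t b S u).filter (· ≠ t) = u := by
  intro u
  induction u with
  | nil =>
    intro b S _
    by_cases ht : t ∈ S <;> cases b <;> simp [dec, ht]
  | cons c u ih =>
    intro b S h
    have hct : c ≠ t := h c (List.mem_cons_self)
    have htail : ∀ c' ∈ u, c' ≠ t := fun c' hc' => h c' (List.mem_cons_of_mem _ hc')
    by_cases hc : c ∈ S
    · cases b <;> simp only [dec, if_pos hc] <;> simp [hct] <;>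
        simpa using ih false (S.erase c) htail
    · cases b <;> simp only [dec, if_neg hc] <;> simp [hct] <;>
        first
          | simpa using ih false S htail
          | simpa using ih true S htail

theorem dec_length {t : ℕ} : ∀ (u : List ℕ) (b : Bool) (S : Finset ℕ),
    S ⊆ insert t u.toFinset → (b = true → S.Nonempty) →
    (dec t b S u).length = u.length + S.card + (cond b 1 0) := by
  intro u
  induction u with
  | nil =>
    intro b S hsub hb
    have : S = ∅ ∨ S = {t} := by
      simpa [Finset.subset_singleton_iff] using hsub
    rcases this with rfl | rfl
    · cases b
      · simp [dec]
      · simpa using hb rfl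
    · cases b <;> simp [dec]
  | cons c u ih =>
    intro b S hsub hb
    by_cases hc : c ∈ S
    · have hcard : 1 ≤ S.card := Finset.card_pos.2 ⟨c, hc⟩
      have hsub' : S.erase c ⊆ insert t u.toFinset := by
        intro x hx
        have hxS := Finset.mem_of_mem_erase hx
        have hxc := Finset.ne_of_mem_erase hx
        have := hsub hxS
        simp only [List.toFinset_cons, Finset.mem_insert] at this ⊢
        tauto
      have hrec := ih false (S.erase c) hsub' (by simp)
      rw [Finset.card_erase_of_mem hc] at hrec
      cases b
      · simp only [dec, if_pos hc]
        simp [hrec]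
        omega
      · simp only [dec, if_pos hc]
        simp [hrec]
        omega
    · have hsub' : S ⊆ insert t u.toFinset := by
        intro x hx
        have := hsub hx
        have hxc : x ≠ c := fun he => hc (he ▸ hx)
        simp only [List.toFinset_cons, Finset.mem_insert] at this ⊢
        tauto
      cases b
      · have hrec := ih false S hsub' (by simp)
        simp only [dec, if_neg hc]
        simp [hrec]
        omega
      · have hrec := ih true S hsub' hb
        simp only [dec, if_neg hc]
        simp [hrec]
        omega

theorem dec_mem {t : ℕ} : ∀ (u : List ℕ) (b : Bool) (S : Finset ℕ) (c : ℕ),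
    c ∈ dec t b S u → c = t ∨ c ∈ u := by
  intro u
  induction u with
  | nil =>
    intro b S c hc
    by_cases ht : t ∈ S <;> cases b <;> simp_all [dec]
  | cons d u ih =>
    intro b S c hc
    by_cases hd : d ∈ S
    · cases b
      · simp [dec, hd] at hc
        have h1 := fun h => ih false (S.erase d) c h
        simp only [List.mem_cons]
        tauto
      · simp [dec, hd] at hc
        have h1 := fun h => ih false (S.erase d) c h
        simp only [List.mem_cons]
        tauto
    · cases b
      · simp [dec, hd] at hc
        have h1 := fun h => ih false S c h
        simp only [List.mem_cons]
        tauto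
      · simp [dec, hd] at hc
        have h1 := fun h => ih true S c h
        simp only [List.mem_cons]
        tauto

theorem dec_mem_t {t : ℕ} : ∀ (u : List ℕ) (b : Bool) (S : Finset ℕ),
    S.Nonempty → S ⊆ insert t u.toFinset → t ∈ dec t b S u := by
  intro u
  induction u with
  | nil =>
    intro b S hne hsub
    have : S = {t} := by
      rcases (by simpa [Finset.subset_singleton_iff] using hsub : S = ∅ ∨ S = {t}) with rfl | rfl
      · exact absurd rfl (Finset.nonempty_iff_ne_empty.1 hne)
      · rfl
    subst this
    cases b <;> simp [dec]
  | cons c u ih =>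
    intro b S hne hsub
    by_cases hc : c ∈ S
    · cases b <;> simp [dec, hc]
    · have hsub' : S ⊆ insert t u.toFinset := by
        intro x hx
        have := hsub hx
        have hxc : x ≠ c := fun he => hc (he ▸ hx)
        simp only [List.toFinset_cons, Finset.mem_insert] at this ⊢
        tauto
      cases b <;> simp [dec, hc] <;> exact Or.inr (ih _ _ hne hsub')

theorem dec_mem_u {t : ℕ} : ∀ (u : List ℕ) (b : Bool) (S : Finset ℕ) (c : ℕ),
    c ∈ u → c ∈ dec t b S u := by
  intro u
  induction u with
  | nil => intro b S c hc; simp at hc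
  | cons d u ih =>
    intro b S c hc
    rcases List.mem_cons.1 hc with rfl | hc
    · by_cases hd : c ∈ S <;> cases b <;> simp [dec, hd]
    · by_cases hd : d ∈ S <;> cases b <;> simp [dec, hd] <;> right <;>
        first
        | exact Or.inr (ih _ _ _ hc)
        | exact ih _ _ _ hc

theorem good_dec {t : ℕ} : ∀ (u : List ℕ) (b : Bool) (S : Finset ℕ) (s : Set ℕ),
    GoodF s u → (∀ c ∈ u, c < t) → (∀ c ∈ S, c ≠ t → c ∉ s) → (b = true → t ∉ s) →
    GoodF s (dec t b S u) := by
  intro u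
  induction u with
  | nil =>
    intro b S s _ _ _ hb
    by_cases ht : t ∈ S
    · cases b
      · simp [dec, ht, GoodF]
      · simp only [dec, if_pos ht, if_pos]
        simp only [GoodF]
        refine ⟨?_, fun y hy => by simp at hy, trivial⟩
        intro y hy hys
        simp only [List.head?_cons, Option.mem_some_iff] at hy
        subst hy
        exact absurd hys (hb rfl)
    · cases b <;> simp [dec, ht, GoodF]
  | cons c u ih =>
    intro b S s hg hlt hS hb
    have hct : c < t := hlt c (List.mem_cons_self)
    have hlt' : ∀ x ∈ u, x < t := fun x hx => hlt x (List.mem_cons_of_mem _ hx)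
    have hg1 : ∀ y ∈ u.head?, y ∈ s → c < y := by simp only [GoodF] at hg; exact hg.1
    have hg2 : GoodF (insert c s) u := by simp only [GoodF] at hg; exact hg.2
    by_cases hc : c ∈ S
    · have hcs : c ∉ s := hS c hc (Nat.ne_of_lt hct)
      have hgu : GoodF (insert c (insert t s)) u := by
        apply goodF_congr u _ hg2
        intro y hy
        have hyt : y ≠ t := Nat.ne_of_lt (hlt' y hy)
        simp [Set.mem_insert_iff, hyt]
      have htail : GoodF (insert c (insert t s)) (dec t false (S.erase c) u) := by
        apply ih false (S.erase c) _ hgu hlt' _ (by simp)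
        intro x hx hxt
        have hxc := Finset.ne_of_mem_erase hx
        have hxs := hS x (Finset.mem_of_mem_erase hx) hxt
        simp [Set.mem_insert_iff, hxc, hxt, hxs]
      have hhead : ∀ y ∈ (dec t false (S.erase c) u).head?, y ∈ insert t s → c < y := by
        intro y hy hys
        cases u with
        | nil =>
          by_cases h' : t ∈ S.erase c
          · simp [dec, h'] at hy
            subst hy
            exact hct
          · simp [dec, h'] at hy
        | cons d u' =>
          by_cases h' : d ∈ S.erase c
          · simp [dec, h'] at hy
            subst hy
            exact hct
          · simp [dec, h'] at hy
            subst hy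
            rcases Set.mem_insert_iff.1 hys with rfl | hys'
            · exact hct
            · exact hg1 d (by simp) hys'
      cases b
      · have hdec : dec t false S (c :: u) = t :: c :: dec t false (S.erase c) u := by
          simp [dec, hc]
        rw [hdec]
        simp only [GoodF]
        refine ⟨?_, hhead, htail⟩
        intro y hy hys
        simp only [List.head?_cons, Option.mem_some_iff] at hy
        subst hy
        exact absurd hys hcs
      · have hdec : dec t true S (c :: u) = t :: t :: c :: dec t false (S.erase c) u := by
          simp [dec, hc]
        rw [hdec]
        simp only [GoodF]
        refine ⟨?_, ?_, ?_, ?_⟩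
        · intro y hy hys
          simp only [List.head?_cons, Option.mem_some_iff] at hy
          subst hy
          exact absurd hys (hb rfl)
        · intro y hy hys
          simp only [List.head?_cons, Option.mem_some_iff] at hy
          subst hy
          rcases Set.mem_insert_iff.1 hys with h | h
          · exact absurd h (Nat.ne_of_lt hct)
          · exact absurd h hcs
        · intro y hy hys
          apply hhead y hy
          rw [Set.insert_idem] at hys
          exact hys
        · apply goodF_congr _ _ htail
          intro y _
          rw [Set.insert_idem]
    · show GoodF s (dec t b S (c :: u))
      simp only [dec, if_neg hc]
      simp only [GoodF]
      constructor
      · intro y hy hys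
        cases u with
        | nil =>
          by_cases h' : t ∈ S <;> cases b <;> simp [dec, h'] at hy <;>
            (subst hy; exact hct)
        | cons d u' =>
          by_cases h' : d ∈ S
          · cases b <;> simp [dec, h'] at hy <;> (subst hy; exact hct)
          · cases b <;> simp [dec, h'] at hy <;> (subst hy; exact hg1 d (by simp) hys)
      · apply ih b S (insert c s) hg2 hlt'
        · intro x hx hxt
          have hxc : x ≠ c := fun he => hc (he ▸ hx)
          have hxs := hS x hx hxt
          simp [Set.mem_insert_iff, hxc, hxs]
        · intro hbt
          have h1 := hb hbt
          have h2 : t ≠ c := Nat.ne_of_gt hct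
          simp [Set.mem_insert_iff, h1, h2]


theorem dec_true_of_false {t : ℕ} : ∀ (u : List ℕ) (S : Finset ℕ) (l : List ℕ),
    (∀ c ∈ u, c ≠ t) → dec t false S u = t :: l → dec t true S u = t :: t :: l := by
  intro u S l h hd
  cases u with
  | nil =>
    by_cases ht : t ∈ S
    · simp only [dec, if_pos ht, if_neg Bool.false_ne_true] at hd
      simp only [dec, if_pos ht, if_pos rfl]
      simp_all
    · simp [dec, ht] at hd
  | cons c u =>
    by_cases hc : c ∈ S
    · simp only [dec, if_pos hc] at hd ⊢
      simp_all
    · simp only [dec, if_neg hc] at hd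
      exact absurd (List.head_eq_of_cons_eq hd) (h c (List.mem_cons_self))

/-! ### Lemmas about enc -/

theorem enc_nil {t : ℕ} : enc t [] = ([], ∅, false) := rfl

theorem enc_tsingle {t : ℕ} : enc t [t] = ([], {t}, false) := by simp [enc]

theorem enc_single {t c : ℕ} (hc : c ≠ t) : enc t [c] = ([c], ∅, false) := by simp [enc, hc]

theorem enc_tt {t : ℕ} (w : List ℕ) :
    enc t (t :: t :: w) = ((enc t (t :: w)).1, (enc t (t :: w)).2.1, true) := by simp [enc]

theorem enc_td {t d : ℕ} (hd : d ≠ t) (w : List ℕ) :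
    enc t (t :: d :: w) =
      ((enc t (d :: w)).1, insert d (enc t (d :: w)).2.1, (enc t (d :: w)).2.2) := by
  simp [enc, hd]

theorem enc_cons_ne {t c : ℕ} (w : List ℕ) (hc : c ≠ t) :
    enc t (c :: w) = (c :: (enc t w).1, (enc t w).2.1, (enc t w).2.2) := by
  cases w with
  | nil => simp [enc, hc]
  | cons d w => simp [enc, hc]

theorem enc_fst {t : ℕ} : ∀ (w : List ℕ), (enc t w).1 = w.filter (· ≠ t) := by
  intro w
  induction w with
  | nil => simp [enc]
  | cons c w ih =>
    by_cases hc : t = c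
    · cases hc
      cases w with
      | nil => simp [enc_tsingle]
      | cons d w' =>
        by_cases hd : t = d
        · cases hd
          rw [enc_tt, List.filter_cons_of_neg (by simp)]
          exact ih
        · rw [enc_td (Ne.symm hd), List.filter_cons_of_neg (by simp)]
          exact ih
    · rw [enc_cons_ne w (Ne.symm hc), List.filter_cons_of_pos (by simpa using Ne.symm hc)]
      rw [ih]

theorem enc_S_mem {t : ℕ} : ∀ (w : List ℕ) (c : ℕ), c ∈ (enc t w).2.1 →
    (c = t ∧ ∃ l, w = l ++ [t]) ∨ ∃ l r, w = l ++ t :: c :: r := by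
  intro w
  induction w with
  | nil => intro c hc; simp [enc_nil] at hc
  | cons a w ih =>
    intro c hc
    by_cases ha : t = a
    · cases ha
      cases w with
      | nil =>
        rw [enc_tsingle] at hc
        simp only [Finset.mem_singleton] at hc
        exact Or.inl ⟨hc, [], rfl⟩
      | cons d w' =>
        by_cases hd : t = d
        · cases hd
          rw [enc_tt] at hc
          rcases ih c hc with ⟨hct, l, hl⟩ | ⟨l, r, hl⟩
          · exact Or.inl ⟨hct, t :: l, by rw [hl]; rfl⟩
          · exact Or.inr ⟨t :: l, r, by rw [hl]; rfl⟩
        · rw [enc_td (Ne.symm hd)] at hc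
          rcases Finset.mem_insert.1 hc with rfl | hc
          · exact Or.inr ⟨[], w', rfl⟩
          · rcases ih c hc with ⟨hct, l, hl⟩ | ⟨l, r, hl⟩
            · exact Or.inl ⟨hct, t :: l, by rw [hl]; rfl⟩
            · exact Or.inr ⟨t :: l, r, by rw [hl]; rfl⟩
    · rw [enc_cons_ne w (Ne.symm ha)] at hc
      rcases ih c hc with ⟨hct, l, hl⟩ | ⟨l, r, hl⟩
      · exact Or.inl ⟨hct, a :: l, by rw [hl]; rfl⟩
      · exact Or.inr ⟨a :: l, r, by rw [hl]; rfl⟩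

theorem enc_b {t : ℕ} : ∀ (w : List ℕ), (enc t w).2.2 = true → ∃ l r, w = l ++ t :: t :: r := by
  intro w
  induction w with
  | nil => intro hb; simp [enc_nil] at hb
  | cons a w ih =>
    intro hb
    by_cases ha : t = a
    · cases ha
      cases w with
      | nil => rw [enc_tsingle] at hb; simp at hb
      | cons d w' =>
        by_cases hd : t = d
        · cases hd
          exact ⟨[], w', rfl⟩
        · rw [enc_td (Ne.symm hd)] at hb
          obtain ⟨l, r, hl⟩ := ih hb
          exact ⟨t :: l, r, by rw [hl]; rfl⟩
    · rw [enc_cons_ne w (Ne.symm ha)] at hb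
      obtain ⟨l, r, hl⟩ := ih hb
      exact ⟨a :: l, r, by rw [hl]; rfl⟩

theorem enc_S_sub {t : ℕ} : ∀ (w : List ℕ) (c : ℕ), c ∈ (enc t w).2.1 → c = t ∨ c ∈ w := by
  intro w c hc
  rcases enc_S_mem w c hc with ⟨rfl, _, _⟩ | ⟨l, r, rfl⟩
  · exact Or.inl rfl
  · exact Or.inr (by simp)

theorem enc_S_nonempty {t : ℕ} : ∀ (w : List ℕ), t ∈ w → (enc t w).2.1.Nonempty := by
  intro w
  induction w with
  | nil => intro h; simp at h
  | cons a w ih =>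
    intro h
    by_cases ha : t = a
    · cases ha
      cases w with
      | nil => rw [enc_tsingle]; exact ⟨t, by simp⟩
      | cons d w' =>
        by_cases hd : t = d
        · cases hd
          rw [enc_tt]
          exact ih (by simp)
        · rw [enc_td (Ne.symm hd)]
          exact ⟨d, by simp⟩
    · rw [enc_cons_ne w (Ne.symm ha)]
      have : t ∈ w := by
        rcases List.mem_cons.1 h with h' | h'
        · exact absurd h' ha
        · exact h'
      exact ih this

theorem enc_dec {t : ℕ} : ∀ (u : List ℕ) (b : Bool) (S : Finset ℕ),
    (∀ c ∈ u, c ≠ t) → S ⊆ insert t u.toFinset → (b = true → S.Nonempty) →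
    enc t (dec t b S u) = (u, S, b) := by
  intro u
  induction u with
  | nil =>
    intro b S _ hsub hb
    rcases (by simpa [Finset.subset_singleton_iff] using hsub : S = ∅ ∨ S = {t}) with rfl | rfl
    · cases b
      · simp [dec, enc_nil]
      · exact absurd (hb rfl) (by simp)
    · cases b
      · simp only [dec, if_pos (Finset.mem_singleton_self t), Bool.false_eq_true, if_false]
        exact enc_tsingle
      · simp only [dec, if_pos (Finset.mem_singleton_self t), if_pos]
        rw [show [t, t] = t :: t :: ([] : List ℕ) from rfl, enc_tt, enc_tsingle]
  | cons c u ih =>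
    intro b S h hsub hb
    have hct : c ≠ t := h c (List.mem_cons_self)
    have htail : ∀ c' ∈ u, c' ≠ t := fun c' hc' => h c' (List.mem_cons_of_mem _ hc')
    by_cases hc : c ∈ S
    · have hsub' : S.erase c ⊆ insert t u.toFinset := by
        intro x hx
        have hxS := Finset.mem_of_mem_erase hx
        have hxc := Finset.ne_of_mem_erase hx
        have := hsub hxS
        simp only [List.toFinset_cons, Finset.mem_insert] at this ⊢
        tauto
      have hih := ih false (S.erase c) htail hsub' (by simp)
      have hcons : enc t (c :: dec t false (S.erase c) u) =
          (c :: u, S.erase c, false) := by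
        rw [enc_cons_ne _ hct, hih]
      have htd : enc t (t :: c :: dec t false (S.erase c) u) = (c :: u, S, false) := by
        rw [enc_td hct, hcons, Finset.insert_erase hc]
      cases b
      · have hdec : dec t false S (c :: u) = t :: c :: dec t false (S.erase c) u := by
          simp [dec, hc]
        rw [hdec, htd]
      · have hdec : dec t true S (c :: u) = t :: t :: c :: dec t false (S.erase c) u := by
          simp [dec, hc]
        rw [hdec, enc_tt, htd]
    · have hsub' : S ⊆ insert t u.toFinset := by
        intro x hx
        have := hsub hx
        have hxc : x ≠ c := fun he => hc (he ▸ hx)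
        simp only [List.toFinset_cons, Finset.mem_insert] at this ⊢
        tauto
      have hdec : dec t b S (c :: u) = c :: dec t b S u := by
        cases b <;> simp [dec, hc]
      rw [hdec, enc_cons_ne _ hct, ih b S htail hsub' hb]

theorem dec_enc {t : ℕ} : ∀ (w : List ℕ), (∀ c ∈ w, c ≤ t) → GoodF ∅ w →
    dec t (enc t w).2.2 (enc t w).2.1 (enc t w).1 = w := by
  intro w
  induction w with
  | nil => intro _ _; rfl
  | cons c w ih =>
    intro hle hgood
    have hle' : ∀ x ∈ w, x ≤ t := fun x hx => hle x (List.mem_cons_of_mem _ hx)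
    by_cases hc : t = c
    · cases hc
      cases w with
      | nil =>
        rw [enc_tsingle]
        simp [dec]
      | cons d rest =>
        have hgood' : GoodF ∅ (d :: rest) := by
          have h2 : GoodF (insert t ∅) (d :: rest) := by
            simp only [GoodF] at hgood; exact hgood.2
          exact goodF_mono _ (Set.empty_subset _) h2
        by_cases hd : t = d
        · cases hd
          rw [enc_tt]
          have hb : (enc t (t :: rest)).2.2 = false := by
            cases hbv : (enc t (t :: rest)).2.2
            · rfl
            obtain ⟨l, r, hl⟩ := enc_b _ hbv
            have hlist : t :: t :: rest = (t :: l) ++ t :: t :: r := by rw [hl]; rfl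
            exact absurd (goodF_pair (t :: l) (hlist ▸ hgood)
              (Or.inr (List.mem_cons_self))) (lt_irrefl t)
          have hihres := ih hle' hgood'
          rw [hb] at hihres
          apply dec_true_of_false
          · rw [enc_fst]
            intro x hx
            simpa using (List.mem_filter.1 hx).2
          · exact hihres
        · have hd' : d ≠ t := Ne.symm hd
          rw [enc_td hd']
          have hb : (enc t (d :: rest)).2.2 = false := by
            cases hbv : (enc t (d :: rest)).2.2
            · rfl
            obtain ⟨l, r, hl⟩ := enc_b _ hbv
            have hlist : t :: d :: rest = (t :: l) ++ t :: t :: r := by rw [hl]; rfl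
            exact absurd (goodF_pair (t :: l) (hlist ▸ hgood)
              (Or.inr (List.mem_cons_self))) (lt_irrefl t)
          have hdS : d ∉ (enc t (d :: rest)).2.1 := by
            intro hmem
            rcases enc_S_mem _ d hmem with ⟨rfl, _, _⟩ | ⟨l, r, hl⟩
            · exact hd rfl
            · cases l with
              | nil =>
                have hdt : d = t := by simpa using congrArg List.head? hl
                exact hd hdt.symm
              | cons e l' =>
                have he : d = e := by simpa using congrArg List.head? hl
                cases he
                have hlist : t :: d :: rest = (t :: d :: l') ++ t :: d :: r := by
                  rw [hl]; rfl
                have hg2 : GoodF ∅ ((t :: d :: l') ++ t :: d :: r) := by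
                  rw [← hlist]; exact hgood
                have hp := goodF_pair (t :: d :: l') hg2
                  (Or.inr (List.mem_cons_of_mem _ (List.mem_cons_self)))
                have hdt : d ≤ t := hle d (by simp)
                omega
          have hfst : (enc t (d :: rest)).1 = d :: (enc t rest).1 := by
            rw [enc_cons_ne _ hd']
          have hihres := ih hle' hgood'
          rw [hb, hfst] at hihres ⊢
          have hdec : dec t false (insert d (enc t (d :: rest)).2.1) (d :: (enc t rest).1) =
              t :: d :: dec t false ((insert d (enc t (d :: rest)).2.1).erase d)
                (enc t rest).1 := by
            simp [dec]
          rw [hdec, Finset.erase_insert hdS]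
          have hrest : dec t false (enc t (d :: rest)).2.1 (enc t rest).1 = rest := by
            have h2 : dec t false (enc t (d :: rest)).2.1 (d :: (enc t rest).1) =
                d :: dec t false (enc t (d :: rest)).2.1 (enc t rest).1 := by
              simp [dec, hdS]
            rw [h2] at hihres
            injection hihres
          rw [hrest]
    · have hc' : c ≠ t := Ne.symm hc
      rw [enc_cons_ne _ hc']
      have hgood' : GoodF ∅ w := by
        have h2 : GoodF (insert c ∅) w := by
          simp only [GoodF] at hgood; exact hgood.2
        exact goodF_mono _ (Set.empty_subset _) h2
      have hcS : c ∉ (enc t w).2.1 := by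
        intro hmem
        rcases enc_S_mem _ c hmem with ⟨rfl, _, _⟩ | ⟨l, r, hl⟩
        · exact hc rfl
        · have hlist : c :: w = (c :: l) ++ t :: c :: r := by rw [hl]; rfl
          have := goodF_pair (c :: l) (hlist ▸ hgood) (Or.inr (List.mem_cons_self))
          have hct : c ≤ t := hle c (List.mem_cons_self)
          omega
      have hdec : dec t (enc t w).2.2 (enc t w).2.1 (c :: (enc t w).1) =
          c :: dec t (enc t w).2.2 (enc t w).2.1 (enc t w).1 := by
        cases hbv : (enc t w).2.2 <;> simp [dec, hcS]
      rw [hdec, ih hle' hgood']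

instance wsetFinite (n k : ℕ) : Finite ↥(WSet n k) := by
  have hf : Function.Injective (fun w : ↥(WSet n k) => (fun i : Fin n =>
      (⟨w.val.get (Fin.cast w.2.1.symm i), by
        have hm : w.val.get (Fin.cast w.2.1.symm i) ∈ w.val := List.get_mem _ _
        have := w.2.2.1 _ hm
        omega⟩ : Fin (k+1)))) := by
    intro w1 w2 h
    apply Subtype.ext
    apply List.ext_get (by rw [w1.2.1, w2.2.1])
    intro i h1 h2
    have := congrFun h ⟨i, by rw [← w1.2.1]; exact h1⟩
    simpa [Fin.ext_iff] using this
  exact Finite.of_injective _ hf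

theorem image_val_attachFin (s : Finset ℕ) {n : ℕ} (h : ∀ m ∈ s, m < n) :
    (s.attachFin h).image Fin.val = s := by
  ext m
  simp only [Finset.mem_image]
  constructor
  · rintro ⟨x, hx, rfl⟩
    exact (Finset.mem_attachFin _).1 hx
  · intro hm
    exact ⟨⟨m, h m hm⟩, (Finset.mem_attachFin _).2 hm, rfl⟩

theorem step (n k : ℕ) :
    Nat.card ↥(WSet n (k+1)) =
      ∑ r ∈ Finset.range (n+1), Nat.card ↥(WSet (n - r) k) * Nat.card (DataT (k+1) r) := by
  classical
  have hbound : ∀ (m : ℕ) (u : ↥(WSet m k)), ∀ c ∈ u.val, c < k := fun m u => u.2.2.1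
  have husub : ∀ (m : ℕ) (u : ↥(WSet m k)) (S0 : Finset (Fin (k+1))),
      (S0.image Fin.val : Finset ℕ) ⊆ insert k u.val.toFinset := by
    intro m u S0 c hc
    simp only [Finset.mem_image] at hc
    obtain ⟨x, _, rfl⟩ := hc
    rcases Nat.lt_succ_iff_lt_or_eq.1 x.2 with hx | hx
    · exact Finset.mem_insert_of_mem (List.mem_toFinset.2 (u.2.2.2.1 _ hx))
    · rw [hx]; exact Finset.mem_insert_self _ _
  let F : (Σ r : Fin (n+1), ↥(WSet (n - (r : ℕ)) k) × DataT (k+1) (r : ℕ)) →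
      ↥(WSet n (k+1)) := fun x =>
    ⟨dec k x.2.2.val.2 (x.2.2.val.1.image Fin.val) x.2.1.val, by
      obtain ⟨r, u, d⟩ := x
      obtain ⟨hne, hcard⟩ := d.2
      have hSne : (d.val.1.image Fin.val).Nonempty := hne.image _
      have hScard : (d.val.1.image Fin.val).card = d.val.1.card :=
        Finset.card_image_of_injective _ Fin.val_injective
      have hsub := husub _ u d.val.1
      refine ⟨?_, ?_, ?_, ?_⟩
      · have hlen := dec_length u.val d.val.2 (d.val.1.image Fin.val) hsub (fun _ => hSne)
        rw [u.2.1, hScard] at hlen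
        rw [hlen]
        have hr := r.2
        omega
      · intro c hc
        rcases dec_mem _ _ _ _ hc with rfl | hc
        · omega
        · have := hbound _ u c hc; omega
      · intro c hck
        rcases Nat.lt_succ_iff_lt_or_eq.1 hck with hx | hx
        · exact dec_mem_u _ _ _ _ (u.2.2.2.1 _ hx)
        · rw [hx]; exact dec_mem_t _ _ _ hSne hsub
      · exact good_dec _ _ _ _ u.2.2.2.2 (hbound _ u) (fun _ _ _ => id) (fun _ => id)⟩
  have hbij : Function.Bijective F := by
    constructor
    · rintro ⟨r1, u1, d1⟩ ⟨r2, u2, d2⟩ hxy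
      have hval : dec k d1.val.2 (d1.val.1.image Fin.val) u1.val
          = dec k d2.val.2 (d2.val.1.image Fin.val) u2.val := congrArg Subtype.val hxy
      have he1 := enc_dec u1.val d1.val.2 (d1.val.1.image Fin.val)
        (fun c hc => Nat.ne_of_lt (hbound _ u1 c hc)) (husub _ u1 d1.val.1)
        (fun _ => d1.2.1.image _)
      have he2 := enc_dec u2.val d2.val.2 (d2.val.1.image Fin.val)
        (fun c hc => Nat.ne_of_lt (hbound _ u2 c hc)) (husub _ u2 d2.val.1)
        (fun _ => d2.2.1.image _)
      rw [hval, he2] at he1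
      have hu : u2.val = u1.val := congrArg Prod.fst he1
      have hS : d2.val.1.image Fin.val = d1.val.1.image Fin.val :=
        congrArg (fun p => p.2.1) he1
      have hb : d2.val.2 = d1.val.2 := congrArg (fun p => p.2.2) he1
      have hS0 : d2.val.1 = d1.val.1 := Finset.image_injective Fin.val_injective hS
      have hrr : r1 = r2 := by
        apply Fin.ext
        have h1 := d1.2.2
        have h2 := d2.2.2
        rw [hS0, hb] at h2
        omega
      cases hrr
      obtain rfl : u1 = u2 := Subtype.ext hu.symm
      obtain rfl : d1 = d2 := Subtype.ext (by
        rw [Prod.ext_iff]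
        exact ⟨hS0.symm, hb.symm⟩)
      rfl
    · rintro ⟨w, hw⟩
      obtain ⟨hwlen, hwlt, hwsurj, hwgood⟩ := hw
      have hle : ∀ c ∈ w, c ≤ k := fun c hc => Nat.lt_succ_iff.1 (hwlt c hc)
      have hdecenc : dec k (enc k w).2.2 (enc k w).2.1 (enc k w).1 = w := dec_enc w hle hwgood
      have hufilter : (enc k w).1 = w.filter (· ≠ k) := enc_fst w
      have hune : ∀ c ∈ (enc k w).1, c ≠ k := by
        rw [hufilter]
        intro c hc
        simpa using (List.mem_filter.1 hc).2
      have hubound : ∀ c ∈ (enc k w).1, c < k := by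
        intro c hc
        have hcw : c ∈ w := by
          rw [hufilter] at hc
          exact List.mem_of_mem_filter hc
        have h1 := hwlt c hcw
        have h2 := hune c hc
        omega
      have hSsub : (enc k w).2.1 ⊆ insert k (enc k w).1.toFinset := by
        intro c hc
        rcases enc_S_sub w c hc with rfl | hcw
        · exact Finset.mem_insert_self _ _
        · by_cases hck : c = k
          · rw [hck]; exact Finset.mem_insert_self _ _
          · apply Finset.mem_insert_of_mem
            apply List.mem_toFinset.2
            rw [hufilter]
            exact List.mem_filter.2 ⟨hcw, by simpa using hck⟩
      have hSne : (enc k w).2.1.Nonempty := enc_S_nonempty w (hwsurj k (Nat.lt_succ_self k))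
      have hSlt : ∀ m ∈ (enc k w).2.1, m < k + 1 := by
        intro m hm
        rcases enc_S_sub w m hm with rfl | hmw
        · omega
        · exact hwlt m hmw
      have hlen : w.length = (enc k w).1.length + (enc k w).2.1.card +
          cond (enc k w).2.2 1 0 := by
        have := dec_length (enc k w).1 (enc k w).2.2 (enc k w).2.1 hSsub (fun _ => hSne)
        rw [hdecenc] at this
        exact this
      have hcard1 : 1 ≤ (enc k w).2.1.card := Finset.card_pos.2 hSne
      refine ⟨⟨⟨(enc k w).2.1.card + cond (enc k w).2.2 1 0, by omega⟩, ⟨(enc k w).1, ?_⟩,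
        ⟨((enc k w).2.1.attachFin hSlt, (enc k w).2.2), ?_, ?_⟩⟩, ?_⟩
      · refine ⟨by simp only []; omega, hubound, ?_, ?_⟩
        · intro c hck
          rw [hufilter]
          refine List.mem_filter.2 ⟨hwsurj c (by omega), by simpa using Nat.ne_of_lt hck⟩
        · rw [hufilter]
          exact good_filter w ∅ hwgood hle
      · obtain ⟨x, hx⟩ := hSne
        exact ⟨⟨x, hSlt x hx⟩, (Finset.mem_attachFin _).2 hx⟩
      · rw [Finset.card_attachFin]
      · apply Subtype.ext
        show dec k (enc k w).2.2 (((enc k w).2.1.attachFin hSlt).image Fin.val) (enc k w).1 = w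
        rw [image_val_attachFin, hdecenc]
  have hcards := Nat.card_eq_of_bijective F hbij
  rw [← hcards]
  have hsig : Nat.card (Σ r : Fin (n+1), ↥(WSet (n - (r : ℕ)) k) × DataT (k+1) (r : ℕ))
      = ∑ r : Fin (n+1), Nat.card (↥(WSet (n - (r : ℕ)) k) × DataT (k+1) (r : ℕ)) := by
    have hf := fun r : Fin (n+1) =>
      Fintype.ofFinite (↥(WSet (n - (r : ℕ)) k) × DataT (k+1) (r : ℕ))
    simp [Nat.card_eq_fintype_card]
  rw [hsig, ← Fin.sum_univ_eq_sum_range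
    (fun r => Nat.card ↥(WSet (n - r) k) * Nat.card (DataT (k+1) r)) (n+1)]
  exact Finset.sum_congr rfl fun r _ => Nat.card_prod _ _

theorem dataT_card (K r : ℕ) :
    (Nat.card (DataT K r) : ℤ) = ((1 + X) * ((1 + X) ^ K - 1) : Polynomial ℤ).coeff r := by
  classical
  have e : DataT K r ≃ ({S : Finset (Fin K) // S.Nonempty ∧ S.card = r} ⊕
      {S : Finset (Fin K) // S.Nonempty ∧ S.card + 1 = r}) :=
    { toFun := fun p => match p with
        | ⟨(S, false), h⟩ => Sum.inl ⟨S, h.1, by simpa using h.2⟩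
        | ⟨(S, true), h⟩ => Sum.inr ⟨S, h.1, by simpa using h.2⟩
      invFun := fun q => match q with
        | Sum.inl ⟨S, h⟩ => ⟨(S, false), h.1, by simpa using h.2⟩
        | Sum.inr ⟨S, h⟩ => ⟨(S, true), h.1, by simpa using h.2⟩
      left_inv := fun p => by rcases p with ⟨⟨S, b⟩, h⟩; cases b <;> rfl
      right_inv := fun q => by rcases q with ⟨S, h⟩ | ⟨S, h⟩ <;> rfl }
  have h1 : ∀ m : ℕ, Nat.card {S : Finset (Fin K) // S.Nonempty ∧ S.card = m} =
      if m = 0 then 0 else K.choose m := by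
    intro m
    match m with
    | 0 =>
      rw [if_pos rfl]
      have : IsEmpty {S : Finset (Fin K) // S.Nonempty ∧ S.card = 0} := by
        constructor
        rintro ⟨S, hne, hc⟩
        rw [Finset.card_eq_zero] at hc
        exact Finset.nonempty_iff_ne_empty.1 hne hc
      exact Nat.card_of_isEmpty
    | m+1 =>
      rw [if_neg (Nat.succ_ne_zero m)]
      have e2 : {S : Finset (Fin K) // S.Nonempty ∧ S.card = m+1} ≃
          {S : Finset (Fin K) // S.card = m+1} :=
        Equiv.subtypeEquivRight (fun S =>
          ⟨fun h => h.2, fun h => ⟨Finset.card_pos.1 (by omega), h⟩⟩)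
      rw [Nat.card_congr e2, Nat.card_eq_fintype_card, Fintype.card_finset_len,
        Fintype.card_fin]
  have h2 : Nat.card {S : Finset (Fin K) // S.Nonempty ∧ S.card + 1 = r} =
      if r ≤ 1 then 0 else K.choose (r - 1) := by
    match r with
    | 0 =>
      rw [if_pos (by omega)]
      have : IsEmpty {S : Finset (Fin K) // S.Nonempty ∧ S.card + 1 = 0} := by
        constructor
        rintro ⟨S, _, hc⟩
        omega
      exact Nat.card_of_isEmpty
    | 1 =>
      rw [if_pos (by omega)]
      have : IsEmpty {S : Finset (Fin K) // S.Nonempty ∧ S.card + 1 = 1} := by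
        constructor
        rintro ⟨S, hne, hc⟩
        have hpos := Finset.card_pos.2 hne
        omega
      exact Nat.card_of_isEmpty
    | m+2 =>
      rw [if_neg (by omega)]
      have e2 : {S : Finset (Fin K) // S.Nonempty ∧ S.card + 1 = m+2} ≃
          {S : Finset (Fin K) // S.Nonempty ∧ S.card = m+1} :=
        Equiv.subtypeEquivRight (fun S => by constructor <;> (rintro ⟨h, hc⟩; exact ⟨h, by omega⟩))
      rw [Nat.card_congr e2, h1 (m+1), if_neg (Nat.succ_ne_zero m)]
      norm_num
  have hpoly : ((1 + X) * ((1 + X) ^ K - 1) : Polynomial ℤ) = (X + 1) ^ (K + 1) - 1 - X := by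
    ring
  rw [Nat.card_congr e, Nat.card_sum, h1 r, h2, hpoly]
  simp only [Polynomial.coeff_sub, Polynomial.coeff_X_add_one_pow, Polynomial.coeff_one,
    Polynomial.coeff_X]
  match r with
  | 0 => norm_num
  | 1 => norm_num
  | m+2 =>
    rw [if_neg (Nat.succ_ne_zero _), if_neg (by omega), if_neg (by omega), if_neg (by omega)]
    rw [Nat.choose_succ_succ' K (m+1)]
    push_cast
    ring_nf

theorem base_case (n : ℕ) :
    (Nat.card ↥(WSet n 1) : ℤ) = (X * (1 + X) : Polynomial ℤ).coeff n := by
  have hx : (X * (1 + X) : Polynomial ℤ) = X + X ^ 2 := by ring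
  rw [hx]
  simp only [Polynomial.coeff_add, Polynomial.coeff_X, Polynomial.coeff_X_pow]
  match n with
  | 0 =>
    have : IsEmpty ↥(WSet 0 1) := by
      constructor
      rintro ⟨w, hlen, _, hsurj, _⟩
      have := hsurj 0 (by omega)
      rw [List.length_eq_zero_iff.1 hlen] at this
      simp at this
    rw [Nat.card_of_isEmpty]
    norm_num
  | 1 =>
    have hset : WSet 1 1 = {[0]} := by
      ext w
      constructor
      · rintro ⟨hlen, hbound, _, _⟩
        have hrep : w = List.replicate 1 0 :=
          List.eq_replicate_iff.2 ⟨hlen, fun b hb => by have := hbound b hb; omega⟩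
        simpa using hrep
      · rintro rfl
        exact ⟨rfl, by simp, fun c hc => by rw [Nat.lt_one_iff.1 hc]; simp, by simp [GoodF]⟩
    rw [hset]
    rw [Nat.card_unique]
    norm_num
  | 2 =>
    have hset : WSet 2 1 = {[0, 0]} := by
      ext w
      constructor
      · rintro ⟨hlen, hbound, _, _⟩
        have hrep : w = List.replicate 2 0 :=
          List.eq_replicate_iff.2 ⟨hlen, fun b hb => by have := hbound b hb; omega⟩
        simpa using hrep
      · rintro rfl
        refine ⟨rfl, by simp, fun c hc => by rw [Nat.lt_one_iff.1 hc]; simp, ?_⟩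
        simp only [GoodF]
        refine ⟨?_, ?_, trivial⟩ <;> simp
    rw [hset]
    rw [Nat.card_unique]
    norm_num
  | (m+3) =>
    have : IsEmpty ↥(WSet (m+3) 1) := by
      constructor
      rintro ⟨w, hlen, hbound, _, hgood⟩
      have hrep : w = List.replicate (m+3) 0 :=
        List.eq_replicate_iff.2 ⟨hlen, fun b hb => by have := hbound b hb; omega⟩
      rw [show List.replicate (m+3) 0 = 0 :: 0 :: 0 :: List.replicate m 0 from rfl] at hrep
      rw [hrep] at hgood
      simp only [GoodF] at hgood
      exact absurd (hgood.2.1 0 (by simp) (by simp)) (lt_irrefl 0)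
    rw [Nat.card_of_isEmpty]
    have h1 : ¬ (1 = m + 3) := by omega
    have h2 : ¬ (m + 3 = 2) := by omega
    rw [if_neg h1, if_neg h2]
    norm_num

theorem key : ∀ k, 1 ≤ k → ∀ n, (Nat.card ↥(WSet n k) : ℤ) =
    Polynomial.coeff (X * (1 + X) ^ k * ∏ j ∈ Finset.Icc 2 k, ((1 + X) ^ j - 1) : Polynomial ℤ) n := by
  intro k
  induction k with
  | zero => intro h; omega
  | succ k ih =>
    intro _ n
    by_cases hk : k = 0
    · subst hk
      rw [show Finset.Icc 2 (0+1) = ∅ from rfl, Finset.prod_empty, mul_one, pow_one]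
      exact base_case n
    · have hk1 : 1 ≤ k := by omega
      have hprod : (X * (1 + X) ^ (k+1) * ∏ j ∈ Finset.Icc 2 (k+1), ((1 + X) ^ j - 1) :
          Polynomial ℤ) = (X * (1 + X) ^ k * ∏ j ∈ Finset.Icc 2 k, ((1 + X) ^ j - 1)) *
          ((1 + X) * ((1 + X) ^ (k+1) - 1)) := by
        rw [Finset.prod_Icc_succ_top (by omega : 2 ≤ k + 1)]
        ring
      rw [step n k, Nat.cast_sum, hprod, Polynomial.coeff_mul,
        Finset.Nat.sum_antidiagonal_eq_sum_range_succ_mk,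
        ← Finset.sum_range_reflect (fun i => Polynomial.coeff
            (X * (1 + X) ^ k * ∏ j ∈ Finset.Icc 2 k, ((1 + X) ^ j - 1) : Polynomial ℤ) i *
          ((1 + X) * ((1 + X) ^ (k+1) - 1) : Polynomial ℤ).coeff (n - i)) (n+1)]
      apply Finset.sum_congr rfl
      intro r hr
      simp only [Finset.mem_range] at hr
      rw [Nat.cast_mul, ih hk1 (n - r), dataT_card (k+1) r]
      rw [show n + 1 - 1 - r = n - r from by omega, show n - (n - r) = r from by omega]

theorem bridge {n k : ℕ} (w : Fin n → Fin k) :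
    (¬ Contains111 w ∧ ¬ Contains121 w) ↔ GoodF ∅ (List.ofFn fun i => (w i : ℕ)) := by
  rw [goodF_iff_forall]
  have hlen : (List.ofFn fun i => (w i : ℕ)).length = n := List.length_ofFn
  have hget : ∀ (j : ℕ) (h : j < n),
      (List.ofFn fun i => (w i : ℕ))[j]'(by rw [hlen]; exact h) = (w ⟨j, h⟩ : ℕ) := by
    intro j h
    rw [List.getElem_ofFn]
  have htake : ∀ (x : ℕ) (j : ℕ),
      (x ∈ (List.ofFn fun i => (w i : ℕ)).take j ↔
        ∃ i : Fin n, (i : ℕ) < j ∧ (w i : ℕ) = x) := by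
    intro x j
    constructor
    · intro hx
      obtain ⟨i, hi, hgeti⟩ := List.mem_iff_getElem.1 hx
      rw [List.length_take, hlen] at hi
      have hin : i < n := by omega
      refine ⟨⟨i, hin⟩, (lt_min_iff.1 hi).1, ?_⟩
      rw [List.getElem_take] at hgeti
      rw [← hgeti, hget i hin]
    · rintro ⟨i, hij, hx⟩
      apply List.mem_iff_getElem.2
      refine ⟨(i : ℕ), by rw [List.length_take, hlen]; exact lt_min hij i.2, ?_⟩
      rw [List.getElem_take, hget _ i.2]
      simpa using hx
  constructor
  · rintro ⟨h111, h121⟩ j hj hmem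
    rw [hlen] at hj
    simp only [Set.mem_empty_iff_false, false_or] at hmem
    rw [htake] at hmem
    obtain ⟨i, hij, hwi⟩ := hmem
    rw [hget (j+1) hj] at hwi
    rw [hget j (by omega), hget (j+1) hj]
    rcases Nat.lt_trichotomy (w ⟨j, by omega⟩ : ℕ) (w ⟨j+1, hj⟩ : ℕ) with h | h | h
    · exact h
    · exfalso
      apply h111
      refine ⟨i, ⟨j, by omega⟩, ⟨j+1, hj⟩, ?_, rfl, ?_, ?_⟩
      · simpa [Fin.lt_def] using hij
      · exact Fin.ext (by omega : (w i : ℕ) = (w ⟨j, by omega⟩ : ℕ))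
      · exact Fin.ext (by omega : (w ⟨j, by omega⟩ : ℕ) = (w ⟨j+1, hj⟩ : ℕ))
    · exfalso
      apply h121
      refine ⟨i, ⟨j, by omega⟩, ⟨j+1, hj⟩, ?_, rfl, ?_, ?_⟩
      · simpa [Fin.lt_def] using hij
      · exact Fin.ext hwi
      · simp only [Fin.lt_def]
        omega
  · intro h
    have hmain : ∀ (i j jk : Fin n), i < j → (j : ℕ) + 1 = (jk : ℕ) → w i = w jk →
        (w j : ℕ) < (w jk : ℕ) := by
      intro i j jk hij hjk h1
      have hj1 : (j : ℕ) + 1 < n := by rw [hjk]; exact jk.2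
      have hjk' : (⟨(j : ℕ) + 1, hj1⟩ : Fin n) = jk := Fin.ext hjk
      have hmem : (List.ofFn fun i => (w i : ℕ))[(j : ℕ)+1]'(by rw [hlen]; exact hj1) ∈
          (∅ : Set ℕ) ∨ (List.ofFn fun i => (w i : ℕ))[(j : ℕ)+1]'(by rw [hlen]; exact hj1) ∈
          (List.ofFn fun i => (w i : ℕ)).take (j : ℕ) := by
        right
        rw [htake]
        refine ⟨i, hij, ?_⟩
        rw [hget _ hj1]
        exact congrArg Fin.val (h1.trans (congrArg w hjk'.symm))
      have hcall := h (j : ℕ) (by rw [hlen]; exact hj1) hmem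
      rw [hget _ (by omega : (j : ℕ) < n), hget _ hj1] at hcall
      have e1 : w ⟨(j : ℕ), by omega⟩ = w j := congrArg w (Fin.eta j _)
      have e2 : w ⟨(j : ℕ) + 1, hj1⟩ = w jk := congrArg w hjk'
      rw [e1, e2] at hcall
      exact hcall
    constructor
    · rintro ⟨i, j, jk, hij, hjk, h1, h2⟩
      have := hmain i j jk hij hjk (h1.trans h2)
      rw [h2] at this
      exact lt_irrefl _ this
    · rintro ⟨i, j, jk, hij, hjk, h1, h2⟩
      have hm := hmain i j jk hij hjk h1
      rw [← h1] at hm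
      rw [Fin.lt_def] at h2
      omega

end Reduced

theorem count_reduced_words_111_121 (n k : ℕ) (hk : 1 ≤ k) (hkn : k ≤ n) :
    (Nat.card {w : Fin n → Fin k //
        Function.Surjective w ∧ ¬ Contains111 w ∧ ¬ Contains121 w} : ℤ) =
      Polynomial.coeff
        (X * (1 + X) ^ k * ∏ j ∈ Finset.Icc 2 k, ((1 + X) ^ j - 1) : Polynomial ℤ) n := by
  have hmem : ∀ (p : {w : Fin n → Fin k //
      Function.Surjective w ∧ ¬ Contains111 w ∧ ¬ Contains121 w}),
      (List.ofFn fun i => (p.val i : ℕ)) ∈ Reduced.WSet n k := by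
    intro p
    obtain ⟨hsurj, h11, h12⟩ := p.2
    refine ⟨List.length_ofFn, ?_, ?_, ?_⟩
    · intro c hc
      obtain ⟨i, rfl⟩ := List.mem_ofFn.1 hc
      exact (p.val i).2
    · intro c hck
      obtain ⟨i, hi⟩ := hsurj ⟨c, hck⟩
      exact List.mem_ofFn.2 ⟨i, by show ((p.val i : Fin k) : ℕ) = c; rw [hi]⟩
    · exact (Reduced.bridge p.val).1 ⟨h11, h12⟩
  have hbij : Function.Bijective (fun p : {w : Fin n → Fin k //
      Function.Surjective w ∧ ¬ Contains111 w ∧ ¬ Contains121 w} =>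
      (⟨List.ofFn fun i => (p.val i : ℕ), hmem p⟩ : ↥(Reduced.WSet n k))) := by
    constructor
    · intro p q hpq
      apply Subtype.ext
      have h1 := congrArg Subtype.val hpq
      simp only at h1
      have h2 := List.ofFn_inj.1 h1
      funext i
      exact Fin.ext (congrFun h2 i)
    · rintro ⟨l, hlen, hbound, hsurjl, hgood⟩
      have hvlt : ∀ (i : Fin n), l[(i : ℕ)]'(by rw [hlen]; exact i.2) < k := by
        intro i
        exact hbound _ (List.getElem_mem _)
      set v : Fin n → Fin k := fun i => ⟨l[(i : ℕ)]'(by rw [hlen]; exact i.2), hvlt i⟩ with hvdef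
      have hofn : (List.ofFn fun i => (v i : ℕ)) = l := by
        apply List.ext_getElem (by rw [List.length_ofFn, hlen])
        intro m h1 h2
        rw [List.getElem_ofFn]
      have hv : Function.Surjective v := by
        intro y
        obtain ⟨m, hm, hml⟩ := List.mem_iff_getElem.1 (hsurjl y.val y.2)
        rw [hlen] at hm
        exact ⟨⟨m, hm⟩, Fin.ext hml⟩
      have hpat := (Reduced.bridge v).2 (by rw [hofn]; exact hgood)
      exact ⟨⟨v, hv, hpat.1, hpat.2⟩, Subtype.ext hofn⟩
  rw [Nat.card_eq_of_bijective _ hbij]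
  exact Reduced.key k hk n
end

section
/- For each integer k ≥ 1, the generating function (in the formal power series ring over the rationals) Σ_{n≥0} a_{n,k} x^n, where a_{n,k} is the number of words of length n over {1,...,k} using every letter of {1,...,k} and avoiding both patterns 1-11 and 1-22, equals x^k · ∏_{j=1}^{k} (x+j) / ∏_{i=1}^{k-1} (1 − i·x). -/
open PowerSeries

/-- `w` contains the generalized pattern 1-22: ∃ i < j < n with w i < w j = w (j+1). -/
def Contains122 {n m : ℕ} (w : Fin n → Fin m) : Prop :=
  ∃ i j k : Fin n, i < j ∧ (j : ℕ) + 1 = (k : ℕ) ∧ w i < w j ∧ w j = w k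

namespace GFAux

def Pat {N M : ℕ} (R : Fin M → Fin M → Prop) (w : Fin N → Fin M) : Prop :=
  ∃ i j k : Fin N, i < j ∧ (j : ℕ) + 1 = (k : ℕ) ∧ R (w i) (w j) ∧ w j = w k

lemma c111 {N M : ℕ} (w : Fin N → Fin M) : Contains111 w ↔ Pat (· = ·) w := Iff.rfl
lemma c122 {N M : ℕ} (w : Fin N → Fin M) : Contains122 w ↔ Pat (· < ·) w := Iff.rfl

def AV {N M : ℕ} (w : Fin N → Fin M) : Prop :=
  Function.Surjective w ∧ ¬ Contains111 w ∧ ¬ Contains122 w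

instance {N M : ℕ} (w : Fin N → Fin M) : Decidable (Contains111 w) :=
  decidable_of_iff (∃ i j k : Fin N, i < j ∧ (j : ℕ) + 1 = (k : ℕ) ∧ w i = w j ∧ w j = w k)
    Iff.rfl

instance {N M : ℕ} (w : Fin N → Fin M) : Decidable (Contains122 w) :=
  decidable_of_iff (∃ i j k : Fin N, i < j ∧ (j : ℕ) + 1 = (k : ℕ) ∧ w i < w j ∧ w j = w k)
    Iff.rfl

instance {N M : ℕ} (w : Fin N → Fin M) : Decidable (AV w) :=
  decidable_of_iff (Function.Surjective w ∧ ¬ Contains111 w ∧ ¬ Contains122 w) Iff.rfl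

noncomputable def cnt (n k : ℕ) : ℕ := Nat.card {w : Fin n → Fin k // AV w}

lemma cnt_eq (n k : ℕ) :
    cnt n k = (Finset.univ.filter (fun w : Fin n → Fin k => AV w)).card := by
  rw [cnt, Nat.card_eq_fintype_card, Fintype.card_subtype]

lemma cnt_eq_zero_of_lt {n k : ℕ} (h : n < k) : cnt n k = 0 := by
  rw [cnt]
  have : IsEmpty {w : Fin n → Fin k // AV w} := by
    constructor
    rintro ⟨w, hw, -⟩
    have := Fintype.card_le_of_surjective w hw
    simp only [Fintype.card_fin] at this
    omega
  exact Nat.card_of_isEmpty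

lemma cnt_zero_zero : cnt 0 0 = 1 := by
  rw [cnt]
  have h : ∀ w : Fin 0 → Fin 0, AV w :=
    fun w => ⟨fun b => b.elim0, fun ⟨i, _⟩ => i.elim0, fun ⟨i, _⟩ => i.elim0⟩
  rw [Nat.card_congr (Equiv.subtypeUnivEquiv h)]
  simp [Nat.card_eq_fintype_card]

lemma cnt_succ_zero (n : ℕ) : cnt (n+1) 0 = 0 := by
  rw [cnt]
  have : IsEmpty {w : Fin (n+1) → Fin 0 // AV w} := ⟨fun ⟨w, _⟩ => (w 0).elim0⟩
  exact Nat.card_of_isEmpty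

lemma cnt_one_one : cnt 1 1 = 1 := by
  rw [cnt]
  have h : ∀ w : Fin 1 → Fin 1, AV w := by
    intro w
    refine ⟨fun b => ⟨0, Subsingleton.elim _ _⟩, ?_, ?_⟩ <;>
      rintro ⟨i, j, k, hij, -⟩ <;> omega
  rw [Nat.card_congr (Equiv.subtypeUnivEquiv h)]
  simp [Nat.card_eq_fintype_card]

variable {n M k : ℕ}


/-- append a letter at the end -/
def app (v : Fin (n+1) → Fin M) (c : Fin M) : Fin (n+2) → Fin M :=
  fun i => if h : (i : ℕ) < n + 1 then v ⟨i, h⟩ else c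

lemma app_lt (v : Fin (n+1) → Fin M) (c : Fin M) {i : Fin (n+2)} (h : (i : ℕ) < n+1) :
    app v c i = v ⟨i, h⟩ := dif_pos h

lemma app_castSucc (v : Fin (n+1) → Fin M) (c : Fin M) (i : Fin (n+1)) :
    app v c i.castSucc = v i := by
  rw [app_lt v c (by simpa using i.isLt)]
  congr 1

lemma app_last (v : Fin (n+1) → Fin M) (c : Fin M) :
    app v c (Fin.last (n+1)) = c := dif_neg (by simp)

lemma pat_app {R : Fin M → Fin M → Prop} (v : Fin (n+1) → Fin M) {c : Fin M}
    (hc : v (Fin.last n) ≠ c) :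
    Pat R (app v c) ↔ Pat R v := by
  constructor
  · rintro ⟨i, j, jk, hij, hjk, h1, h2⟩
    rw [Fin.lt_def] at hij
    by_cases hk : (jk : ℕ) < n + 1
    · have hj : (j : ℕ) < n + 1 := by omega
      have hi : (i : ℕ) < n + 1 := by omega
      rw [app_lt v c hi, app_lt v c hj] at h1
      rw [app_lt v c hj, app_lt v c hk] at h2
      exact ⟨⟨i, hi⟩, ⟨j, hj⟩, ⟨jk, hk⟩, hij, hjk,
        h1, h2⟩
    · have hjn : (j : ℕ) = n := by have := jk.isLt; omega
      have hjv : app v c j = v (Fin.last n) := by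
        rw [app_lt v c (by omega)]
        congr 1
        exact Fin.ext (by simp [hjn])
      have hkv : app v c jk = c := by
        have : jk = Fin.last (n+1) := Fin.ext (by have := jk.isLt; simp; omega)
        rw [this, app_last]
      rw [hjv, hkv] at h2
      exact absurd h2 hc
  · rintro ⟨i, j, jk, hij, hjk, h1, h2⟩
    refine ⟨⟨i, by omega⟩, ⟨j, by omega⟩, ⟨jk, by omega⟩,
      hij, hjk, ?_, ?_⟩
    · rwa [app_lt v c (show ((⟨(i:ℕ), by omega⟩ : Fin (n+2)) : ℕ) < n+1 from i.isLt),
        app_lt v c (show ((⟨(j:ℕ), by omega⟩ : Fin (n+2)) : ℕ) < n+1 from j.isLt)]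
    · rwa [app_lt v c (show ((⟨(j:ℕ), by omega⟩ : Fin (n+2)) : ℕ) < n+1 from j.isLt),
        app_lt v c (show ((⟨(jk:ℕ), by omega⟩ : Fin (n+2)) : ℕ) < n+1 from jk.isLt)]

lemma pat_comp {N M M' : ℕ} {e : Fin M → Fin M'} (he : Function.Injective e)
    {R : Fin M' → Fin M' → Prop} {R' : Fin M → Fin M → Prop}
    (hR : ∀ a b, R (e a) (e b) ↔ R' a b) (v : Fin N → Fin M) :
    Pat R (e ∘ v) ↔ Pat R' v := by
  constructor <;> rintro ⟨i, j, jk, h1, h2, h3, h4⟩ <;> refine ⟨i, j, jk, h1, h2, ?_, ?_⟩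
  · exact (hR _ _).mp h3
  · exact he h4
  · exact (hR _ _).mpr h3
  · exact congrArg e h4

/-- the double-zero appending for case D -/
def appD (w'' : Fin n → Fin k) : Fin (n+2) → Fin (k+1) :=
  fun i => if h : (i : ℕ) < n then (w'' ⟨i, h⟩).succ else 0

lemma appD_lt (w'' : Fin n → Fin k) {i : Fin (n+2)} (h : (i : ℕ) < n) :
    appD w'' i = (w'' ⟨i, h⟩).succ := dif_pos h

lemma appD_ge (w'' : Fin n → Fin k) {i : Fin (n+2)} (h : ¬ (i : ℕ) < n) :
    appD w'' i = 0 := dif_neg h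

lemma pat_appD {R : Fin (k+1) → Fin (k+1) → Prop} {R' : Fin k → Fin k → Prop}
    (hR : ∀ a b, R a.succ b.succ ↔ R' a b) (hR0 : ∀ a : Fin k, ¬ R a.succ 0)
    (w'' : Fin n → Fin k) :
    Pat R (appD w'') ↔ Pat R' w'' := by
  constructor
  · rintro ⟨i, j, jk, hij, hjk, h1, h2⟩
    rw [Fin.lt_def] at hij
    by_cases hk : (jk : ℕ) < n
    · have hj : (j : ℕ) < n := by omega
      have hi : (i : ℕ) < n := by omega
      rw [appD_lt w'' hi, appD_lt w'' hj] at h1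
      rw [appD_lt w'' hj, appD_lt w'' hk] at h2
      exact ⟨⟨i, hi⟩, ⟨j, hj⟩, ⟨jk, hk⟩, hij, hjk,
        (hR _ _).mp h1, Fin.succ_injective _ h2⟩
    · by_cases hj : (j : ℕ) < n
      · rw [appD_lt w'' hj, appD_ge w'' hk] at h2
        exact absurd h2 (Fin.succ_ne_zero _)
      · have hi : (i : ℕ) < n := by have := jk.isLt; omega
        rw [appD_lt w'' hi, appD_ge w'' hj] at h1
        exact absurd h1 (hR0 _)
  · rintro ⟨i, j, jk, hij, hjk, h1, h2⟩
    refine ⟨⟨i, by omega⟩, ⟨j, by omega⟩, ⟨jk, by omega⟩,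
      hij, hjk, ?_, ?_⟩
    · rw [appD_lt w'' (show ((⟨(i:ℕ), by omega⟩ : Fin (n+2)) : ℕ) < n from i.isLt),
        appD_lt w'' (show ((⟨(j:ℕ), by omega⟩ : Fin (n+2)) : ℕ) < n from j.isLt)]
      exact (hR _ _).mpr h1
    · rw [appD_lt w'' (show ((⟨(j:ℕ), by omega⟩ : Fin (n+2)) : ℕ) < n from j.isLt),
        appD_lt w'' (show ((⟨(jk:ℕ), by omega⟩ : Fin (n+2)) : ℕ) < n from jk.isLt)]
      exact congrArg Fin.succ h2


lemma cardD (n k : ℕ) :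
    (Finset.univ.filter fun w : Fin (n+2) → Fin (k+1) =>
      AV w ∧ w ((Fin.last n).castSucc) = w (Fin.last (n+1))).card = cnt n k := by
  rw [cnt_eq]
  symm
  refine Finset.card_bij (fun w'' _ => appD w'') ?_ ?_ ?_
  · intro w'' hw''
    simp only [Finset.mem_filter, Finset.mem_univ, true_and] at hw'' ⊢
    obtain ⟨hsurj, h1, h2⟩ := hw''
    refine ⟨⟨?_, ?_, ?_⟩, ?_⟩
    · intro x
      rcases Fin.eq_zero_or_eq_succ x with rfl | ⟨d, rfl⟩
      · exact ⟨Fin.last (n+1), appD_ge w'' (by simp)⟩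
      · obtain ⟨i, hi⟩ := hsurj d
        refine ⟨⟨(i : ℕ), by omega⟩, ?_⟩
        rw [appD_lt w'' i.isLt]
        simp only [Fin.eta]
        exact congrArg Fin.succ hi
    · exact fun hp => h1 ((pat_appD (fun a b => Fin.succ_inj)
        (fun a => Fin.succ_ne_zero a) w'').mp hp)
    · exact fun hp => h2 ((pat_appD (fun a b => Fin.succ_lt_succ_iff)
        (fun a => Fin.not_lt_zero _) w'').mp hp)
    · rw [appD_ge w'' (by simp), appD_ge w'' (by simp)]
  · intro w1 h1 w2 h2 heq
    funext i
    have h := congrFun heq ⟨(i : ℕ), by omega⟩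
    rw [appD_lt w1 i.isLt, appD_lt w2 i.isLt] at h
    have := Fin.succ_inj.mp h
    simpa [Fin.eta] using this
  · intro b hb
    simp only [Finset.mem_filter, Finset.mem_univ, true_and] at hb
    obtain ⟨⟨hsurj, h1, h2⟩, hq⟩ := hb
    have hval : (((Fin.last n).castSucc : Fin (n+2)) : ℕ) + 1
        = ((Fin.last (n+1) : Fin (n+2)) : ℕ) := by simp
    have hlt : ∀ i : Fin (n+2), (i : ℕ) < n → b ((Fin.last n).castSucc) < b i := by
      intro i hi
      have hiS : i < (Fin.last n).castSucc := by
        rw [Fin.lt_def]; simpa using hi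
      rcases lt_trichotomy (b i) (b ((Fin.last n).castSucc)) with h | h | h
      · exact absurd ⟨i, _, _, hiS, hval, h, hq⟩ h2
      · exact absurd ⟨i, _, _, hiS, hval, h, hq⟩ h1
      · exact h
    have hS0 : b ((Fin.last n).castSucc) = 0 := by
      obtain ⟨p, hp⟩ := hsurj 0
      by_cases hpn : (p : ℕ) < n
      · exact absurd (hp ▸ hlt p hpn) (Fin.not_lt_zero _)
      · rcases (by omega : (p : ℕ) = n ∨ (p : ℕ) = n + 1) with h | h
        · rw [show ((Fin.last n).castSucc : Fin (n+2)) = p from Fin.ext (by simp [h]), hp]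
        · rw [hq, show (Fin.last (n+1) : Fin (n+2)) = p from Fin.ext (by simp [h]), hp]
    have hpos : ∀ (i : Fin (n+2)), (i : ℕ) < n → b i ≠ 0 := by
      intro i hi h0
      have := hlt i hi
      rw [h0, hS0] at this
      exact absurd this (lt_irrefl _)
    have hw : appD (fun i : Fin n => (b ⟨(i : ℕ), by omega⟩).pred (hpos _ i.isLt)) = b := by
      funext i
      by_cases h : (i : ℕ) < n
      · rw [appD_lt _ h, Fin.succ_pred]
      · rw [appD_ge _ h]
        rcases (by omega : (i : ℕ) = n ∨ (i : ℕ) = n + 1) with h' | h'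
        · rw [show i = (Fin.last n).castSucc from Fin.ext (by simp [h']), hS0]
        · rw [show i = Fin.last (n+1) from Fin.ext (by simp [h']), ← hq, hS0]
    refine ⟨fun i => (b ⟨(i : ℕ), by omega⟩).pred (hpos _ i.isLt), ?_, hw⟩
    simp only [Finset.mem_filter, Finset.mem_univ, true_and]
    refine ⟨?_, ?_, ?_⟩
    · intro d
      obtain ⟨p, hp⟩ := hsurj d.succ
      have hpn : (p : ℕ) < n := by
        by_contra hc
        have hb0 : b p = 0 := by
          rcases (by omega : (p : ℕ) = n ∨ (p : ℕ) = n + 1) with h | h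
          · rw [show p = (Fin.last n).castSucc from Fin.ext (by simp [h]), hS0]
          · rw [show p = Fin.last (n+1) from Fin.ext (by simp [h]), ← hq, hS0]
        rw [hp] at hb0
        exact Fin.succ_ne_zero d hb0
      refine ⟨⟨(p : ℕ), hpn⟩, ?_⟩
      have hbp : b ⟨(p : ℕ), by omega⟩ = d.succ := by rw [Fin.eta]; exact hp
      simp only [hbp, Fin.pred_succ]
    · intro hp
      apply h1
      rw [← hw]
      exact (pat_appD (fun a b => Fin.succ_inj) (fun a => Fin.succ_ne_zero a) _).mpr hp
    · intro hp
      apply h2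
      rw [← hw]
      exact (pat_appD (fun a b => Fin.succ_lt_succ_iff) (fun a => Fin.not_lt_zero _) _).mpr hp

lemma cardC (n k : ℕ) :
    (Finset.univ.filter fun w : Fin (n+2) → Fin (k+1) =>
      AV w ∧ ∀ i : Fin (n+1), w i.castSucc ≠ w (Fin.last (n+1))).card
      = (k+1) * cnt (n+1) k := by
  have key : ((Finset.univ : Finset (Fin (k+1))) ×ˢ
      (Finset.univ.filter fun w' : Fin (n+1) → Fin k => AV w')).card
      = (Finset.univ.filter fun w : Fin (n+2) → Fin (k+1) =>
        AV w ∧ ∀ i : Fin (n+1), w i.castSucc ≠ w (Fin.last (n+1))).card := by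
    refine Finset.card_bij (fun p _ => app (p.1.succAbove ∘ p.2) p.1) ?_ ?_ ?_
    · rintro ⟨c, w'⟩ hp
      simp only [Finset.mem_product, Finset.mem_filter, Finset.mem_univ, true_and] at hp ⊢
      obtain ⟨hsurj, h1, h2⟩ := hp
      have hlast : (c.succAbove ∘ w') (Fin.last n) ≠ c := Fin.succAbove_ne c _
      refine ⟨⟨?_, ?_, ?_⟩, ?_⟩
      · intro x
        by_cases hx : x = c
        · exact ⟨Fin.last (n+1), by rw [app_last, hx]⟩
        · obtain ⟨d, hd⟩ := Fin.exists_succAbove_eq hx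
          obtain ⟨i, hi⟩ := hsurj d
          refine ⟨i.castSucc, ?_⟩
          rw [app_castSucc]
          show c.succAbove (w' i) = x
          rw [hi, hd]
      · intro hp
        exact h1 ((pat_comp (Fin.succAbove_right_injective (p := c))
          (fun a b => Fin.succAbove_right_inj (p := c)) w').mp ((pat_app _ hlast).mp hp))
      · intro hp
        exact h2 ((pat_comp (Fin.succAbove_right_injective (p := c))
          (fun a b => (Fin.strictMono_succAbove c).lt_iff_lt) w').mp
          ((pat_app _ hlast).mp hp))
      · intro i
        rw [app_castSucc, app_last]
        exact Fin.succAbove_ne c (w' i)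
    · rintro ⟨c1, w1⟩ hp1 ⟨c2, w2⟩ hp2 heq
      simp only at heq
      have hc : c1 = c2 := by
        have := congrFun heq (Fin.last (n+1))
        rwa [app_last, app_last] at this
      subst hc
      have hww : w1 = w2 := by
        funext i
        have := congrFun heq i.castSucc
        rw [app_castSucc, app_castSucc] at this
        exact Fin.succAbove_right_injective this
      rw [hww]
    · intro b hb
      simp only [Finset.mem_filter, Finset.mem_univ, true_and] at hb
      obtain ⟨⟨hsurj, h1, h2⟩, hc⟩ := hb
      have hex : ∀ i : Fin (n+1),
          ∃ z : Fin k, (b (Fin.last (n+1))).succAbove z = b i.castSucc :=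
        fun i => Fin.exists_succAbove_eq (hc i)
      choose w' hw' using hex
      have hlast : ((b (Fin.last (n+1))).succAbove ∘ w') (Fin.last n) ≠ b (Fin.last (n+1)) :=
        Fin.succAbove_ne _ _
      have hw : app ((b (Fin.last (n+1))).succAbove ∘ w') (b (Fin.last (n+1))) = b := by
        funext i
        by_cases h : (i : ℕ) < n + 1
        · rw [app_lt _ _ h]
          show (b (Fin.last (n+1))).succAbove (w' ⟨i, h⟩) = b i
          rw [hw' ⟨i, h⟩]
          congr 1
        · have hi : i = Fin.last (n+1) := Fin.ext (by have := i.isLt; simp; omega)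
          rw [hi, app_last]
      refine ⟨(b (Fin.last (n+1)), w'), ?_, hw⟩
      simp only [Finset.mem_product, Finset.mem_filter, Finset.mem_univ, true_and]
      refine ⟨?_, ?_, ?_⟩
      · intro d
        obtain ⟨p, hp⟩ := hsurj ((b (Fin.last (n+1))).succAbove d)
        have hpl : (p : ℕ) < n + 1 := by
          by_contra hcon
          have hp' : p = Fin.last (n+1) := Fin.ext (by have := p.isLt; simp; omega)
          rw [hp'] at hp
          exact Fin.ne_succAbove _ d hp
        refine ⟨⟨(p : ℕ), hpl⟩, ?_⟩
        apply Fin.succAbove_right_injective (p := b (Fin.last (n+1)))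
        rw [hw' ⟨(p : ℕ), hpl⟩,
          show ((⟨(p : ℕ), hpl⟩ : Fin (n+1)).castSucc) = p from Fin.ext (by simp)]
        exact hp
      · intro hp
        apply h1
        rw [← hw]
        exact (pat_app _ hlast).mpr ((pat_comp
          (Fin.succAbove_right_injective (p := b (Fin.last (n+1))))
          (fun u v => Fin.succAbove_right_inj (p := b (Fin.last (n+1)))) w').mpr hp)
      · intro hp
        apply h2
        rw [← hw]
        exact (pat_app _ hlast).mpr ((pat_comp
          (Fin.succAbove_right_injective (p := b (Fin.last (n+1))))
          (fun u v => (Fin.strictMono_succAbove _).lt_iff_lt) w').mpr hp)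
  rw [← key, Finset.card_product, Finset.card_univ, Fintype.card_fin, cnt_eq]

lemma cardB (n k : ℕ) :
    (Finset.univ.filter fun w : Fin (n+2) → Fin (k+1) =>
      (AV w ∧ ¬ w ((Fin.last n).castSucc) = w (Fin.last (n+1))) ∧
        ¬ ∀ i : Fin (n+1), w i.castSucc ≠ w (Fin.last (n+1))).card
      = cnt (n+1) (k+1) * k := by
  have key : (((Finset.univ.filter fun w' : Fin (n+1) → Fin (k+1) => AV w')) ×ˢ
      (Finset.univ : Finset (Fin k))).card
      = (Finset.univ.filter fun w : Fin (n+2) → Fin (k+1) =>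
        (AV w ∧ ¬ w ((Fin.last n).castSucc) = w (Fin.last (n+1))) ∧
        ¬ ∀ i : Fin (n+1), w i.castSucc ≠ w (Fin.last (n+1))).card := by
    refine Finset.card_bij
      (fun p _ => app p.1 ((p.1 (Fin.last n)).succAbove p.2)) ?_ ?_ ?_
    · rintro ⟨w', d⟩ hp
      simp only [Finset.mem_product, Finset.mem_filter, Finset.mem_univ, true_and,
        and_true] at hp ⊢
      obtain ⟨hsurj, h1, h2⟩ := hp
      have hlast : w' (Fin.last n) ≠ (w' (Fin.last n)).succAbove d := Fin.ne_succAbove _ _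
      refine ⟨⟨⟨?_, ?_, ?_⟩, ?_⟩, ?_⟩
      · intro x
        obtain ⟨i, hi⟩ := hsurj x
        exact ⟨i.castSucc, by rw [app_castSucc]; exact hi⟩
      · exact fun hp => h1 ((pat_app _ hlast).mp hp)
      · exact fun hp => h2 ((pat_app _ hlast).mp hp)
      · rw [app_castSucc, app_last]
        exact hlast
      · intro hall
        obtain ⟨i, hi⟩ := hsurj ((w' (Fin.last n)).succAbove d)
        exact hall i (by rw [app_castSucc, app_last]; exact hi)
    · rintro ⟨w1, d1⟩ hp1 ⟨w2, d2⟩ hp2 heq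
      simp only at heq
      have hww : w1 = w2 := by
        funext i
        have := congrFun heq i.castSucc
        rwa [app_castSucc, app_castSucc] at this
      subst hww
      have hd : d1 = d2 := by
        have := congrFun heq (Fin.last (n+1))
        rw [app_last, app_last] at this
        exact Fin.succAbove_right_injective this
      rw [hd]
    · intro b hb
      simp only [Finset.mem_filter, Finset.mem_univ, true_and] at hb
      obtain ⟨⟨⟨hsurj, h1, h2⟩, hnp⟩, hnq⟩ := hb
      have hS : (fun i : Fin (n+1) => b i.castSucc) (Fin.last n) ≠ b (Fin.last (n+1)) := hnp
      obtain ⟨d, hd⟩ := Fin.exists_succAbove_eq (Ne.symm hS)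
      have hlast : (fun i : Fin (n+1) => b i.castSucc) (Fin.last n)
          ≠ ((fun i : Fin (n+1) => b i.castSucc) (Fin.last n)).succAbove d :=
        Fin.ne_succAbove _ _
      have hw : app (fun i : Fin (n+1) => b i.castSucc)
          (((fun i : Fin (n+1) => b i.castSucc) (Fin.last n)).succAbove d) = b := by
        funext i
        by_cases h : (i : ℕ) < n + 1
        · rw [app_lt _ _ h]
          show b (⟨(i : ℕ), h⟩ : Fin (n+1)).castSucc = b i
          congr 1
        · have hi : i = Fin.last (n+1) := Fin.ext (by have := i.isLt; simp; omega)
          rw [hi, app_last, hd]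
      refine ⟨(fun i : Fin (n+1) => b i.castSucc, d), ?_, hw⟩
      simp only [Finset.mem_product, Finset.mem_filter, Finset.mem_univ, true_and,
        and_true]
      refine ⟨?_, ?_, ?_⟩
      · intro x
        obtain ⟨p, hp⟩ := hsurj x
        by_cases hpl : (p : ℕ) < n + 1
        · refine ⟨⟨(p : ℕ), hpl⟩, ?_⟩
          show b _ = x
          rw [show ((⟨(p : ℕ), hpl⟩ : Fin (n+1)).castSucc) = p from Fin.ext (by simp)]
          exact hp
        · have hp' : p = Fin.last (n+1) := Fin.ext (by have := p.isLt; simp; omega)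
          push_neg at hnq
          obtain ⟨i, hi⟩ := hnq
          exact ⟨i, by show b i.castSucc = x; rw [hi, ← hp', hp]⟩
      · intro hp
        apply h1
        rw [← hw]
        exact (pat_app _ hlast).mpr hp
      · intro hp
        apply h2
        rw [← hw]
        exact (pat_app _ hlast).mpr hp
  rw [← key, Finset.card_product, Finset.card_univ, Fintype.card_fin, cnt_eq]

lemma cnt_rec (n k : ℕ) :
    cnt (n+2) (k+1) = cnt n k + (k+1) * cnt (n+1) k + cnt (n+1) (k+1) * k := by
  have hsplit1 := Finset.card_filter_add_card_filter_not
    (s := Finset.univ.filter (fun w : Fin (n+2) → Fin (k+1) => AV w))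
    (p := fun w => w ((Fin.last n).castSucc) = w (Fin.last (n+1)))
  rw [Finset.filter_filter, Finset.filter_filter] at hsplit1
  have hsplit2 := Finset.card_filter_add_card_filter_not
    (s := Finset.univ.filter (fun w : Fin (n+2) → Fin (k+1) =>
      AV w ∧ ¬ w ((Fin.last n).castSucc) = w (Fin.last (n+1))))
    (p := fun w => ∀ i : Fin (n+1), w i.castSucc ≠ w (Fin.last (n+1)))
  rw [Finset.filter_filter, Finset.filter_filter] at hsplit2
  have hCeq :
      (Finset.univ.filter fun w : Fin (n+2) → Fin (k+1) =>
          (AV w ∧ ¬ w ((Fin.last n).castSucc) = w (Fin.last (n+1)))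
            ∧ ∀ i : Fin (n+1), w i.castSucc ≠ w (Fin.last (n+1)))
      = (Finset.univ.filter fun w : Fin (n+2) → Fin (k+1) =>
          AV w ∧ ∀ i : Fin (n+1), w i.castSucc ≠ w (Fin.last (n+1))) := by
    apply Finset.filter_congr
    intro w _
    constructor
    · rintro ⟨⟨hAV, -⟩, hq⟩; exact ⟨hAV, hq⟩
    · rintro ⟨hAV, hq⟩; exact ⟨⟨hAV, hq (Fin.last n)⟩, hq⟩
  rw [cnt_eq, ← hsplit1, ← hsplit2, hCeq, cardD, cardC, cardB]
  ring

lemma cnt_one (k : ℕ) : cnt 1 (k+1) = (k+1) * cnt 0 k := by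
  match k with
  | 0 => rw [cnt_one_one, cnt_zero_zero]
  | k+1 =>
      rw [cnt_eq_zero_of_lt (by omega), cnt_eq_zero_of_lt (show 0 < k+1 by omega)]
      simp

noncomputable def F (k : ℕ) : PowerSeries ℚ := PowerSeries.mk fun n => (cnt n k : ℚ)

lemma F_key (k : ℕ) :
    (1 - PowerSeries.C (R := ℚ) (k : ℚ) * X) * F (k+1)
      = (X ^ 2 + PowerSeries.C (R := ℚ) ((k : ℚ) + 1) * X) * F k := by
  have L : (1 - PowerSeries.C (R := ℚ) (k : ℚ) * X) * F (k+1)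
      = F (k+1) - PowerSeries.C (R := ℚ) (k : ℚ) * (X * F (k+1)) := by ring
  have R : (X ^ 2 + PowerSeries.C (R := ℚ) ((k : ℚ) + 1) * X) * F k
      = X * (X * F k) + PowerSeries.C (R := ℚ) ((k : ℚ) + 1) * (X * F k) := by ring
  rw [L, R]
  ext n
  rw [map_sub, map_add, PowerSeries.coeff_C_mul, PowerSeries.coeff_C_mul]
  match n with
  | 0 =>
      simp only [PowerSeries.coeff_zero_X_mul, F, PowerSeries.coeff_mk]
      rw [cnt_eq_zero_of_lt (by omega)]
      simp
  | 1 =>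
      rw [PowerSeries.coeff_succ_X_mul, PowerSeries.coeff_succ_X_mul,
        PowerSeries.coeff_zero_X_mul, PowerSeries.coeff_succ_X_mul]
      simp only [F, PowerSeries.coeff_mk]
      rw [cnt_eq_zero_of_lt (show 0 < k + 1 by omega), cnt_one k]
      push_cast
      ring
  | n + 2 =>
      rw [PowerSeries.coeff_succ_X_mul, PowerSeries.coeff_succ_X_mul,
        PowerSeries.coeff_succ_X_mul, PowerSeries.coeff_succ_X_mul]
      simp only [F, PowerSeries.coeff_mk]
      have h := cnt_rec n k
      have h' : (cnt (n+2) (k+1) : ℚ)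
          = cnt n k + ((k : ℚ) + 1) * cnt (n+1) k + cnt (n+1) (k+1) * k := by
        exact_mod_cast congrArg (Nat.cast : ℕ → ℚ) h
      linarith [h']

lemma F_zero : F 0 = 1 := by
  ext n
  simp only [F, PowerSeries.coeff_mk, PowerSeries.coeff_one]
  match n with
  | 0 => rw [cnt_zero_zero]; norm_num
  | n + 1 => rw [cnt_succ_zero]; norm_num

lemma Q_const (m : ℕ) :
    constantCoeff (R := ℚ) (∏ i ∈ Finset.Icc 1 m, (1 - PowerSeries.C (R := ℚ) (i : ℚ) * X)) = 1 := by
  rw [map_prod]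
  rw [Finset.prod_congr rfl (fun i _ => ?_), Finset.prod_const_one]
  simp

lemma Q_const_ne (m : ℕ) :
    constantCoeff (R := ℚ) (∏ i ∈ Finset.Icc 1 m, (1 - PowerSeries.C (R := ℚ) (i : ℚ) * X)) ≠ 0 := by
  rw [Q_const]; exact one_ne_zero

lemma F_one : F 1 = X ^ 2 + X := by
  have h := F_key 0
  rw [F_zero] at h
  simpa using h

lemma main (k : ℕ) (hk : 1 ≤ k) :
    F k = X ^ k * (∏ j ∈ Finset.Icc 1 k, (X + PowerSeries.C (R := ℚ) (j : ℚ))) *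
      (∏ i ∈ Finset.Icc 1 (k - 1), (1 - PowerSeries.C (R := ℚ) (i : ℚ) * X))⁻¹ := by
  induction k, hk using Nat.le_induction with
  | base =>
      rw [PowerSeries.eq_mul_inv_iff_mul_eq (Q_const_ne 0)]
      rw [show Finset.Icc 1 0 = (∅ : Finset ℕ) from Finset.Icc_eq_empty (by omega)]
      rw [Finset.Icc_self, Finset.prod_singleton, Finset.prod_empty, mul_one, F_one]
      simp only [Nat.cast_one, map_one]
      ring
  | succ k hk ih =>
      rw [show k + 1 - 1 = k from rfl]
      rw [PowerSeries.eq_mul_inv_iff_mul_eq (Q_const_ne k)]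
      have hsplitQ : ∏ i ∈ Finset.Icc 1 k, (1 - PowerSeries.C (R := ℚ) (i : ℚ) * X)
          = (1 - PowerSeries.C (R := ℚ) (k : ℚ) * X)
            * ∏ i ∈ Finset.Icc 1 (k-1), (1 - PowerSeries.C (R := ℚ) (i : ℚ) * X) := by
        rw [show Finset.Icc 1 k = insert k (Finset.Icc 1 (k-1)) from by
          ext x; simp only [Finset.mem_insert, Finset.mem_Icc]; omega]
        rw [Finset.prod_insert (by simp only [Finset.mem_Icc]; omega)]
      have hsplitP : ∏ j ∈ Finset.Icc 1 (k+1), (X + PowerSeries.C (R := ℚ) (j : ℚ))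
          = (X + PowerSeries.C (R := ℚ) ((k : ℚ) + 1))
            * ∏ j ∈ Finset.Icc 1 k, (X + PowerSeries.C (R := ℚ) (j : ℚ)) := by
        rw [show Finset.Icc 1 (k+1) = insert (k+1) (Finset.Icc 1 k) from by
          ext x; simp only [Finset.mem_insert, Finset.mem_Icc]; omega]
        rw [Finset.prod_insert (by simp only [Finset.mem_Icc]; omega)]
        push_cast
        ring
      have hFk : F k * ∏ i ∈ Finset.Icc 1 (k-1), (1 - PowerSeries.C (R := ℚ) (i : ℚ) * X)
          = X ^ k * ∏ j ∈ Finset.Icc 1 k, (X + PowerSeries.C (R := ℚ) (j : ℚ)) := by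
        rw [ih, mul_assoc]
        rw [show (∏ i ∈ Finset.Icc 1 (k-1), (1 - PowerSeries.C (R := ℚ) (i : ℚ) * X))⁻¹
            * ∏ i ∈ Finset.Icc 1 (k-1), (1 - PowerSeries.C (R := ℚ) (i : ℚ) * X) = 1 from by
          rw [mul_comm]; exact PowerSeries.mul_inv_cancel _ (Q_const_ne (k-1))]
        rw [mul_one]
      calc F (k+1) * ∏ i ∈ Finset.Icc 1 k, (1 - PowerSeries.C (R := ℚ) (i : ℚ) * X)
          = ((1 - PowerSeries.C (R := ℚ) (k : ℚ) * X) * F (k+1))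
            * ∏ i ∈ Finset.Icc 1 (k-1), (1 - PowerSeries.C (R := ℚ) (i : ℚ) * X) := by
            rw [hsplitQ]; ring
        _ = ((X ^ 2 + PowerSeries.C (R := ℚ) ((k : ℚ) + 1) * X) * F k)
            * ∏ i ∈ Finset.Icc 1 (k-1), (1 - PowerSeries.C (R := ℚ) (i : ℚ) * X) := by
            rw [F_key k]
        _ = (X ^ 2 + PowerSeries.C (R := ℚ) ((k : ℚ) + 1) * X)
            * (F k * ∏ i ∈ Finset.Icc 1 (k-1), (1 - PowerSeries.C (R := ℚ) (i : ℚ) * X)) := by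
            ring
        _ = (X ^ 2 + PowerSeries.C (R := ℚ) ((k : ℚ) + 1) * X)
            * (X ^ k * ∏ j ∈ Finset.Icc 1 k, (X + PowerSeries.C (R := ℚ) (j : ℚ))) := by
            rw [hFk]
        _ = X ^ (k+1) * ((X + PowerSeries.C (R := ℚ) ((k : ℚ) + 1))
            * ∏ j ∈ Finset.Icc 1 k, (X + PowerSeries.C (R := ℚ) (j : ℚ))) := by
            ring
        _ = X ^ (k+1) * ∏ j ∈ Finset.Icc 1 (k+1), (X + PowerSeries.C (R := ℚ) (j : ℚ)) := by
            rw [hsplitP]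

end GFAux

theorem gf_reduced_words_111_122 (k : ℕ) (hk : 1 ≤ k) :
    (PowerSeries.mk fun n =>
        (Nat.card {w : Fin n → Fin k //
            Function.Surjective w ∧ ¬ Contains111 w ∧ ¬ Contains122 w} : ℚ)) =
      (X : ℚ⟦X⟧) ^ k * (∏ j ∈ Finset.Icc 1 k, (X + PowerSeries.C (R := ℚ) (j : ℚ))) *
        (∏ i ∈ Finset.Icc 1 (k - 1), (1 - PowerSeries.C (R := ℚ) (i : ℚ) * X))⁻¹ := by
  exact GFAux.main k hk
end
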